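/- arXiv:0802.4130 — 2 statements merged into one kernel-verified Lean document; each statement's English description precedes it below -/
import Mathlib

section
/- Let Q denote the Gaussian tail function Q(x) = ∫_x^∞ (1/√(2π)) e^{-t²/2} dt. For constants M > 0, σ > 0 and g ≥ 0, the detection probability P_d(γ) = Q((γ - M(σ² + g))/(σ √(2M(σ² + 2g)))) is a concave function of γ on the set {γ : γ ≤ M(σ² + g)}. -/
/-! `Q' = -φ` with `φ` the standard normal density, and `φ` increases on `(-∞, 0]`, so `Q` is
concave there. `P_d` is `Q` precomposed with an increasing affine map sending
`{γ ≤ M(σ² + g)}` onto `(-∞, 0]`. -/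

noncomputable def gaussQ (x : ℝ) : ℝ :=
  ∫ t in Set.Ioi x, (Real.sqrt (2 * Real.pi))⁻¹ * Real.exp (-t ^ 2 / 2)

open Set MeasureTheory ProbabilityTheory

theorem hasDerivAt_integral_Ioi {E : Type*} [NormedAddCommGroup E] [NormedSpace ℝ E]
    [CompleteSpace E] {f : ℝ → E} (hf : Integrable f) (hf_cont : Continuous f) (x : ℝ) :
    HasDerivAt (fun y => ∫ t in Ioi y, f t) (-f x) x := by
  have htail : (fun y => ∫ t in Ioi y, f t) =
      fun y => (∫ t in Ioi 0, f t) - ∫ t in 0..y, f t := by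
    funext y
    exact eq_sub_of_add_eq'
      (intervalIntegral.integral_interval_add_Ioi hf.integrableOn hf.integrableOn)
  rw [htail]
  simpa using (hf_cont.integral_hasStrictDerivAt 0 x).hasDerivAt.const_sub _

theorem concaveOn_integral_Ioi_of_monotoneOn {f : ℝ → ℝ} {a : ℝ} (hf : Integrable f)
    (hf_cont : Continuous f) (hf_mono : MonotoneOn f (Iic a)) :
    ConcaveOn ℝ (Iic a) (fun y => ∫ t in Ioi y, f t) := by
  have hderiv := hasDerivAt_integral_Ioi hf hf_cont
  refine AntitoneOn.concaveOn_of_deriv (convex_Iic a)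
    (fun x _ => (hderiv x).continuousAt.continuousWithinAt)
    (fun x _ => (hderiv x).differentiableAt.differentiableWithinAt) ?_
  intro x hx y hy hxy
  rw [interior_Iic] at hx hy
  simp only [(hderiv _).deriv, neg_le_neg_iff]
  exact hf_mono (Iio_subset_Iic_self hx) (Iio_subset_Iic_self hy) hxy

theorem ConcaveOn.comp_sub_div {f : ℝ → ℝ} (hf : ConcaveOn ℝ (Iic 0) f) (c : ℝ) {s : ℝ}
    (hs : 0 < s) : ConcaveOn ℝ (Iic c) (fun γ => f ((γ - c) / s)) := by
  let normalize : ℝ →ᵃ[ℝ] ℝ :=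
    (LinearMap.lsmul ℝ ℝ s⁻¹).toAffineMap - AffineMap.const ℝ ℝ (c / s)
  have hnormalize (γ : ℝ) : normalize γ = (γ - c) / s := by
    simp only [normalize, AffineMap.coe_sub, LinearMap.coe_toAffineMap, AffineMap.coe_const,
      Pi.sub_apply, LinearMap.lsmul_apply, smul_eq_mul, Function.const_apply]
    ring
  have hdomain : Iic c = normalize ⁻¹' Iic 0 := by
    ext γ
    simp [hnormalize, div_nonpos_iff, hs.le, hs.not_ge]
  have hcomp : (fun γ => f ((γ - c) / s)) = f ∘ normalize := by
    funext γ
    simp [hnormalize]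
  rw [hdomain, hcomp]
  exact hf.comp_affineMap normalize

theorem continuous_gaussianPDFReal (μ : ℝ) (v : NNReal) : Continuous (gaussianPDFReal μ v) := by
  unfold gaussianPDFReal
  fun_prop

theorem monotoneOn_gaussianPDFReal_Iic (μ : ℝ) (v : NNReal) :
    MonotoneOn (gaussianPDFReal μ v) (Iic μ) := by
  intro x hx y hy hxy
  unfold gaussianPDFReal
  gcongr _ * Real.exp ?_
  gcongr ?_ / _
  nlinarith [mem_Iic.1 hx, mem_Iic.1 hy]

theorem gaussQ_eq_integral_gaussianPDFReal (x : ℝ) :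
    gaussQ x = ∫ t in Ioi x, gaussianPDFReal 0 1 t := by
  simp [gaussQ, gaussianPDFReal]

theorem concaveOn_gaussQ_Iic : ConcaveOn ℝ (Iic 0) gaussQ := by
  rw [funext gaussQ_eq_integral_gaussianPDFReal]
  exact concaveOn_integral_Ioi_of_monotoneOn (integrable_gaussianPDFReal 0 1)
    (continuous_gaussianPDFReal 0 1) (monotoneOn_gaussianPDFReal_Iic 0 1)

/-- the detection probability
`P_d(γ) = Q((γ - M(σ²+g))/(σ√(2M(σ²+2g))))` is concave on `{γ : γ ≤ M(σ²+g)}`. -/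
theorem Pd_concaveOn (M σ g : ℝ) (hM : 0 < M) (hσ : 0 < σ) (hg : 0 ≤ g) :
    ConcaveOn ℝ {γ : ℝ | γ ≤ M * (σ ^ 2 + g)}
      (fun γ : ℝ =>
        gaussQ ((γ - M * (σ ^ 2 + g)) / (σ * Real.sqrt (2 * M * (σ ^ 2 + 2 * g))))) := by
  have hscale : 0 < σ * Real.sqrt (2 * M * (σ ^ 2 + 2 * g)) := by positivity
  exact concaveOn_gaussQ_Iic.comp_sub_div _ hscale
end

section
/- Let Q denote the Gaussian tail function Q(x) = ∫_x^∞ (1/√(2π)) e^{-t²/2} dt. Fix K ∈ ℕ, M > 0, σ > 0, and for each k = 0, …, K−1 let r_k ≥ 0, g_k ≥ 0, δ ∈ ℝ, P_f^{(k)}(γ) = Q((γ - M σ²)/(σ² √(2M))), and P_m^{(k)}(γ) = 1 - Q((γ - M(σ² + g_k))/(σ √(2M(σ² + 2g_k)))). Suppose bounds γ_min,k and γ_max,k satisfy M σ² ≤ γ_min,k ≤ γ_max,k ≤ M(σ² + g_k) for every k. Then the feasible set of problem (P3), namely {γ ∈ ℝ^K : Σ_{k=0}^{K−1} r_k (1 -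 P_f^{(k)}(γ_k)) ≥ δ, and γ_min,k ≤ γ_k ≤ γ_max,k for all k}, is a convex subset of ℝ^K, and for any c_k ≥ 0 the objective γ ↦ Σ_{k=0}^{K−1} c_k P_m^{(k)}(γ_k) is convex on this set. -/
/-! `1 - Q` is the standard normal distribution function `Φ`, whose derivative is the density `φ`.
Since `φ` increases on `(-∞, 0]` and decreases on `[0, ∞)`, `Φ` is convex on the left half-line and
concave on the right one. Each argument `(γ_k - a)/b` is affine in `γ` with `b ≥ 0`, and the box
constraints keep the arguments of the `P_f` terms nonnegative and those of the `P_m` terms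
nonpositive. So on the box the throughput is a nonnegative combination of concave functions, its
superlevel set is convex, and the interference is a nonnegative combination of convex functions. -/

open MeasureTheory Set

section FinsetSum

variable {𝕜 E β ι : Type*} [Semiring 𝕜] [PartialOrder 𝕜] [AddCommMonoid E] [SMul 𝕜 E]
  [AddCommMonoid β] [PartialOrder β] [IsOrderedAddMonoid β] [Module 𝕜 β]
  {s : Set E} {t : Finset ι} {f : ι → E → β}

theorem ConvexOn.sum (hs : Convex 𝕜 s) (h : ∀ i ∈ t, ConvexOn 𝕜 s (f i)) :
    ConvexOn 𝕜 s fun x => ∑ i ∈ t, f i x := by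
  simpa only [← Finset.sum_apply] using
    Finset.sum_induction _ (ConvexOn 𝕜 s) (fun _ _ => ConvexOn.add) (convexOn_const 0 hs) h

theorem ConcaveOn.sum (hs : Convex 𝕜 s) (h : ∀ i ∈ t, ConcaveOn 𝕜 s (f i)) :
    ConcaveOn 𝕜 s fun x => ∑ i ∈ t, f i x := by
  simpa only [← Finset.sum_apply] using
    Finset.sum_induction _ (ConcaveOn 𝕜 s) (fun _ _ => ConcaveOn.add) (concaveOn_const 0 hs) h

end FinsetSum

noncomputable def stdNormalPDF (t : ℝ) : ℝ :=
  (Real.sqrt (2 * Real.pi))⁻¹ * Real.exp (-t ^ 2 / 2)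

theorem integrable_stdNormalPDF : Integrable stdNormalPDF :=
  ((integrable_exp_neg_mul_sq (b := 1 / 2) (by norm_num)).const_mul
    (Real.sqrt (2 * Real.pi))⁻¹).congr
    (.of_forall fun t => by unfold stdNormalPDF; ring_nf)

theorem continuous_stdNormalPDF : Continuous stdNormalPDF := by
  unfold stdNormalPDF; fun_prop

theorem stdNormalPDF_monotoneOn : MonotoneOn stdNormalPDF (Iic 0) := fun x _ y hy hxy =>
  mul_le_mul_of_nonneg_left (Real.exp_le_exp.2 (by nlinarith [mem_Iic.1 hy])) (by positivity)

theorem stdNormalPDF_antitoneOn : AntitoneOn stdNormalPDF (Ici 0) := fun x hx y _ hxy =>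
  mul_le_mul_of_nonneg_left (Real.exp_le_exp.2 (by nlinarith [mem_Ici.1 hx])) (by positivity)

theorem hasDerivAt_one_sub_gaussQ (x : ℝ) :
    HasDerivAt (fun y => 1 - gaussQ y) (stdNormalPDF x) x := by
  have hQ : ∀ y, 1 - gaussQ y = 1 - gaussQ 0 + ∫ t in (0 : ℝ)..y, stdNormalPDF t := fun y => by
    rw [← intervalIntegral.integral_Ioi_sub_Ioi' integrable_stdNormalPDF.integrableOn
      integrable_stdNormalPDF.integrableOn]
    unfold gaussQ stdNormalPDF
    ring
  rw [funext hQ]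
  exact ((intervalIntegral.integral_hasDerivAt_right
    integrable_stdNormalPDF.intervalIntegrable
    continuous_stdNormalPDF.stronglyMeasurable.stronglyMeasurableAtFilter
    continuous_stdNormalPDF.continuousAt).const_add (1 - gaussQ 0))

theorem deriv_one_sub_gaussQ : deriv (fun y => 1 - gaussQ y) = stdNormalPDF :=
  funext fun x => (hasDerivAt_one_sub_gaussQ x).deriv

theorem convexOn_one_sub_gaussQ : ConvexOn ℝ (Iic 0) fun x => 1 - gaussQ x := by
  refine MonotoneOn.convexOn_of_deriv (convex_Iic 0)
    (fun x _ => (hasDerivAt_one_sub_gaussQ x).continuousAt.continuousWithinAt)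
    (fun x _ => (hasDerivAt_one_sub_gaussQ x).differentiableAt.differentiableWithinAt) ?_
  rw [deriv_one_sub_gaussQ, interior_Iic]
  exact stdNormalPDF_monotoneOn.mono Iio_subset_Iic_self

theorem concaveOn_one_sub_gaussQ : ConcaveOn ℝ (Ici 0) fun x => 1 - gaussQ x := by
  refine AntitoneOn.concaveOn_of_deriv (convex_Ici 0)
    (fun x _ => (hasDerivAt_one_sub_gaussQ x).continuousAt.continuousWithinAt)
    (fun x _ => (hasDerivAt_one_sub_gaussQ x).differentiableAt.differentiableWithinAt) ?_
  rw [deriv_one_sub_gaussQ, interior_Ici]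
  exact stdNormalPDF_antitoneOn.mono Ioi_subset_Ici_self

noncomputable def zScore {ι : Type*} (i : ι) (a b : ℝ) : (ι → ℝ) →ᵃ[ℝ] ℝ where
  toFun x := (x i - a) / b
  linear := b⁻¹ • LinearMap.proj i
  map_vadd' x v := by
    simp only [Pi.vadd_apply', vadd_eq_add, LinearMap.smul_apply, LinearMap.coe_proj,
      Function.eval, smul_eq_mul]
    ring

section zScore

variable {ι : Type*} {s : Set (ι → ℝ)} {i : ι} {a b : ℝ}

theorem convexOn_one_sub_gaussQ_zScore (hs : Convex ℝ s) (hb : 0 ≤ b) (hsa : ∀ x ∈ s, x i ≤ a) :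
    ConvexOn ℝ s fun x => 1 - gaussQ (zScore i a b x) :=
  (convexOn_one_sub_gaussQ.comp_affineMap (zScore i a b)).subset
    (fun x hx => div_nonpos_of_nonpos_of_nonneg (sub_nonpos.2 (hsa x hx)) hb) hs

theorem concaveOn_one_sub_gaussQ_zScore (hs : Convex ℝ s) (hb : 0 ≤ b) (hsa : ∀ x ∈ s, a ≤ x i) :
    ConcaveOn ℝ s fun x => 1 - gaussQ (zScore i a b x) :=
  (concaveOn_one_sub_gaussQ.comp_affineMap (zScore i a b)).subset
    (fun x hx => div_nonneg (sub_nonneg.2 (hsa x hx)) hb) hs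

end zScore

theorem P3_feasible_convex_and_objective_convexOn_general (K : ℕ) (M σ δ : ℝ)
    (hσ : 0 < σ)
    (r g : Fin K → ℝ) (hr : ∀ k, 0 ≤ r k)
    (γmin γmax : Fin K → ℝ)
    (hbounds : ∀ k, M * σ ^ 2 ≤ γmin k ∧ γmin k ≤ γmax k ∧
      γmax k ≤ M * (σ ^ 2 + g k)) :
    Convex ℝ
      {γ : Fin K → ℝ |
        δ ≤ ∑ k : Fin K,
          r k * (1 - gaussQ ((γ k - M * σ ^ 2) / (σ ^ 2 * Real.sqrt (2 * M)))) ∧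
        (∀ k : Fin K, γmin k ≤ γ k ∧ γ k ≤ γmax k)} ∧
    (∀ c : Fin K → ℝ, (∀ k, 0 ≤ c k) →
      ConvexOn ℝ
        {γ : Fin K → ℝ |
          δ ≤ ∑ k : Fin K,
            r k * (1 - gaussQ ((γ k - M * σ ^ 2) / (σ ^ 2 * Real.sqrt (2 * M)))) ∧
          (∀ k : Fin K, γmin k ≤ γ k ∧ γ k ≤ γmax k)}
        (fun γ : Fin K → ℝ =>
          ∑ k : Fin K,
            c k * (1 - gaussQ ((γ k - M * (σ ^ 2 + g k)) /
              (σ * Real.sqrt (2 * M * (σ ^ 2 + 2 * g k))))))) := by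
  set box := {γ : Fin K → ℝ | ∀ k, γmin k ≤ γ k ∧ γ k ≤ γmax k}
  have hbox : Convex ℝ box := fun x hx y hy a b ha hb hab k =>
    convex_Icc (γmin k) (γmax k) (hx k) (hy k) ha hb hab
  have hthroughput : ConcaveOn ℝ box fun γ => ∑ k, r k *
      (1 - gaussQ ((γ k - M * σ ^ 2) / (σ ^ 2 * Real.sqrt (2 * M)))) :=
    ConcaveOn.sum hbox fun k _ => (concaveOn_one_sub_gaussQ_zScore hbox (by positivity)
      fun γ hγ => (hbounds k).1.trans (hγ k).1).smul (hr k)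
  have hfeasible : Convex ℝ {γ | δ ≤ ∑ k, r k *
      (1 - gaussQ ((γ k - M * σ ^ 2) / (σ ^ 2 * Real.sqrt (2 * M)))) ∧ γ ∈ box} := by
    simpa only [and_comm] using hthroughput.convex_ge δ
  refine ⟨hfeasible, fun c hc => ?_⟩
  refine (ConvexOn.sum hbox fun k _ => ?_).subset (fun γ hγ => hγ.2) hfeasible
  exact (convexOn_one_sub_gaussQ_zScore hbox (by positivity)
    fun γ hγ => (hγ k).2.trans (hbounds k).2.2).smul (hc k)

/-- the feasible set of problem (P3),
`{γ ∈ ℝ^K : Σ_k r_k (1 - P_f^{(k)}(γ_k)) ≥ δ, γ_min,k ≤ γ_k ≤ γ_max,k ∀k}`,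
is convex whenever `Mσ² ≤ γ_min,k ≤ γ_max,k ≤ M(σ² + g_k)`, and for any
nonnegative costs `c_k` the objective `Σ_k c_k P_m^{(k)}(γ_k)` is convex on it. -/
theorem P3_feasible_convex_and_objective_convexOn (K : ℕ) (M σ δ : ℝ)
    (hM : 0 < M) (hσ : 0 < σ)
    (r g : Fin K → ℝ) (hr : ∀ k, 0 ≤ r k) (hg : ∀ k, 0 ≤ g k)
    (γmin γmax : Fin K → ℝ)
    (hbounds : ∀ k, M * σ ^ 2 ≤ γmin k ∧ γmin k ≤ γmax k ∧
      γmax k ≤ M * (σ ^ 2 + g k)) :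
    Convex ℝ
      {γ : Fin K → ℝ |
        δ ≤ ∑ k : Fin K,
          r k * (1 - gaussQ ((γ k - M * σ ^ 2) / (σ ^ 2 * Real.sqrt (2 * M)))) ∧
        (∀ k : Fin K, γmin k ≤ γ k ∧ γ k ≤ γmax k)} ∧
    (∀ c : Fin K → ℝ, (∀ k, 0 ≤ c k) →
      ConvexOn ℝ
        {γ : Fin K → ℝ |
          δ ≤ ∑ k : Fin K,
            r k * (1 - gaussQ ((γ k - M * σ ^ 2) / (σ ^ 2 * Real.sqrt (2 * M)))) ∧
          (∀ k : Fin K, γmin k ≤ γ k ∧ γ k ≤ γmax k)}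
        (fun γ : Fin K → ℝ =>
          ∑ k : Fin K,
            c k * (1 - gaussQ ((γ k - M * (σ ^ 2 + g k)) /
              (σ * Real.sqrt (2 * M * (σ ^ 2 + 2 * g k))))))) :=
  P3_feasible_convex_and_objective_convexOn_general K M σ δ hσ r g hr γmin γmax hbounds
end
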